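/- arXiv:1110.1390 — 2 statements merged into one kernel-verified Lean document; each statement's English description precedes it below -/
import Mathlib

section
/- Let Ω be a compact Hausdorff space, Ω⁰ ⊆ Ω a closed subset, n ≥ 1, B a C*-algebra, and ρ : B → C(Ω⁰, M_n) a *-homomorphism. Let R = {(f, b) ∈ C(Ω, M_n) ⊕ B : f|_{Ω⁰} = ρ(b)}, a C*-subalgebra of C(Ω, M_n) ⊕ B. Then every closed two-sided ideal J of R satisfies J = {(f, b) ∈ R : (there exists g ∈ C(Ω, M_n) with (g, b) ∈ J) and f(ω) = 0 for every ω ∈ Ω such that g(ω) = 0 for all (g, c) ∈ J}. -/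
/-!
Subtracting an element of `J` with the same `B`-coordinate reduces the claim to `x = (f, 0)`
with `f` vanishing on `Ω⁰` and on the common zero set `Z` of `J`. The scalars `μ ∈ C(Ω, ℂ)` with
`(μ g, 0) ∈ J` for all `g` vanishing on `Ω⁰` form a closed ideal of `C(Ω, ℂ)`. Since
`∑ᵢ Eᵢⱼ A Eₖᵢ = Aⱼₖ • 1`, this ideal has no common zero outside `Ω⁰ ∪ Z`, so it contains every
function vanishing on `Ω⁰ ∪ Z`. Multiplying `f` by such a function that equals `1` where
`‖f‖ ≥ ε` puts `x` within `ε` of `J`.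
-/

open scoped ContinuousMap

universe u

/-- The pullback `R = {(f, b) ∈ C(Ω, Mₙ) ⊕ B : f|_{Ω⁰} = ρ(b)}` of the restriction map
`C(Ω, Mₙ) → C(Ω⁰, Mₙ)` and `ρ : B → C(Ω⁰, Mₙ)`, as a C*-subalgebra of
`C(Ω, Mₙ) ⊕ B`. -/
noncomputable def pullbackAlg (Ω : Type u) [TopologicalSpace Ω] (Ω₀ : Set Ω) (n : ℕ)
    (B : Type u) [NonUnitalNormedRing B] [StarRing B] [CStarRing B] [NormedSpace ℂ B]
    [IsScalarTower ℂ B B] [SMulCommClass ℂ B B] [StarModule ℂ B] [CompleteSpace B]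
    (ρ : B →⋆ₙₐ[ℂ] C(↥Ω₀, Matrix (Fin n) (Fin n) ℂ)) :
    NonUnitalStarSubalgebra ℂ (C(Ω, Matrix (Fin n) (Fin n) ℂ) × B) where
  carrier := {p | ∀ (ω : Ω) (hω : ω ∈ Ω₀), p.1 ω = ρ p.2 ⟨ω, hω⟩}
  add_mem' := by
    intro p q hp hq ω hω
    simp [hp ω hω, hq ω hω]
  zero_mem' := by
    intro ω hω
    simp
  mul_mem' := by
    intro p q hp hq ω hω
    simp [hp ω hω, hq ω hω]
  smul_mem' := by
    intro c p hp ω hω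
    simp [hp ω hω]
  star_mem' := by
    intro p hp ω hω
    simp [hp ω hω, ← ContinuousMap.star_apply, ← map_star]

attribute [local instance] Matrix.normedAddCommGroup Matrix.normedSpace

theorem Matrix.sum_single_mul_mul_single_mul {ι α : Type*} [Fintype ι] [DecidableEq ι]
    [CommSemiring α] (A G : Matrix ι ι α) (j k : ι) :
    ∑ i, single i j 1 * A * single k i 1 * G = A j k • G := by
  simp only [single_mul_mul_single, one_mul, mul_one, ← Finset.sum_mul]
  rw [sum_single_eq_diagonal, ← smul_one_eq_diagonal, smul_one_mul]

namespace ContinuousMap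

theorem smul_eqOn_zero {X R M : Type*} [TopologicalSpace X] [Semiring R] [TopologicalSpace R]
    [TopologicalSpace M] [AddCommMonoid M] [Module R M] [ContinuousSMul R M]
    {g : C(X, M)} {s : Set X} (hg : Set.EqOn g 0 s) (μ : C(X, R)) :
    Set.EqOn (μ • g) 0 s := fun x hx => by
  simp [hg hx]

theorem exists_eqOn_zero_norm_sub_smul_le {X E : Type*} (𝕜 : Type*) [TopologicalSpace X]
    [NormalSpace X] [RCLike 𝕜] [SeminormedAddCommGroup E] [NormedSpace 𝕜 E]
    (f : C(X, E)) {Z : Set X} (hZ : IsClosed Z) (hf : Set.EqOn f 0 Z) {ε : ℝ} (hε : 0 < ε) :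
    ∃ χ : C(X, 𝕜), Set.EqOn χ 0 Z ∧ ∀ x, ‖f x - χ x • f x‖ ≤ ε := by
  set K := {x | ε ≤ ‖f x‖}
  have hK : IsClosed K := isClosed_le continuous_const (continuous_norm.comp f.continuous)
  have hZK : Disjoint Z K := Set.disjoint_left.2 fun x hxZ hxK => by
    have : ε ≤ 0 := by simpa [K, hf hxZ] using hxK
    linarith
  obtain ⟨φ, hφZ, hφK, hφ01⟩ := exists_continuous_zero_one_of_isClosed hZ hK hZK
  refine ⟨(ContinuousMap.mk ((↑) : ℝ → 𝕜) RCLike.continuous_ofReal).comp φ,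
    fun x hx => by simp [hφZ hx], fun x => ?_⟩
  have hsub : f x - (φ x : 𝕜) • f x = ((1 - φ x : ℝ) : 𝕜) • f x := by
    rw [RCLike.ofReal_sub, RCLike.ofReal_one, sub_smul, one_smul]
  simp only [comp_apply, coe_mk]
  rw [hsub, norm_smul, RCLike.norm_ofReal, abs_of_nonneg (by linarith [(hφ01 x).2])]
  by_cases hx : x ∈ K
  · simp [hφK hx, hε.le]
  · calc (1 - φ x) * ‖f x‖ ≤ 1 * ε := by
          gcongr
          · linarith [(hφ01 x).1]
          · exact (not_le.1 hx).le
      _ = ε := one_mul ε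

end ContinuousMap

namespace pullbackAlg

variable {Ω : Type u} [TopologicalSpace Ω] {Ω₀ : Set Ω} {n : ℕ}
    {B : Type u} [NonUnitalNormedRing B] [StarRing B] [CStarRing B] [NormedSpace ℂ B]
    [IsScalarTower ℂ B B] [SMulCommClass ℂ B B] [StarModule ℂ B] [CompleteSpace B]
    {ρ : B →⋆ₙₐ[ℂ] C(↥Ω₀, Matrix (Fin n) (Fin n) ℂ)}

variable (ρ) in
def ofVanishing (g : C(Ω, Matrix (Fin n) (Fin n) ℂ)) (hg : Set.EqOn g 0 Ω₀) :
    pullbackAlg Ω Ω₀ n B ρ :=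
  ⟨(g, 0), fun ω hω => by simpa using hg hω⟩

variable (ρ) in
@[simp]
theorem coe_ofVanishing (g : C(Ω, Matrix (Fin n) (Fin n) ℂ)) (hg : Set.EqOn g 0 Ω₀) :
    (ofVanishing ρ g hg : C(Ω, Matrix (Fin n) (Fin n) ℂ) × B) = (g, 0) :=
  rfl

theorem fst_eqOn_zero_of_snd_eq_zero {x : pullbackAlg Ω Ω₀ n B ρ}
    (hx : (x : C(Ω, Matrix (Fin n) (Fin n) ℂ) × B).2 = 0) :
    Set.EqOn (x : C(Ω, Matrix (Fin n) (Fin n) ℂ) × B).1 0 Ω₀ := fun ω hω => by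
  simp [x.2 ω hω, hx]

variable {J : TwoSidedIdeal (pullbackAlg Ω Ω₀ n B ρ)}

variable (J) in
/-- Unlike `J`, this is an ideal of the commutative algebra `C(Ω, ℂ)`, whose closed ideals are
determined by their zero sets. -/
def scalarIdeal : Ideal C(Ω, ℂ) where
  carrier := {μ | ∀ (g : C(Ω, Matrix (Fin n) (Fin n) ℂ)) (hg : Set.EqOn g 0 Ω₀),
    ofVanishing ρ (μ • g) (ContinuousMap.smul_eqOn_zero hg μ) ∈ J}
  zero_mem' g hg := by
    convert J.zero_mem
    exact Subtype.ext (Prod.ext (zero_smul C(Ω, ℂ) g) rfl)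
  add_mem' {μ ν} hμ hν g hg := by
    convert J.add_mem (hμ g hg) (hν g hg) using 1
    exact Subtype.ext (Prod.ext (add_smul μ ν g) (add_zero 0).symm)
  smul_mem' c μ hμ g hg := by
    convert hμ (c • g) (ContinuousMap.smul_eqOn_zero hg c) using 2
    rw [smul_eq_mul, mul_comm]
    exact mul_smul μ c g

variable (J) in
def zeroLocus : Set Ω :=
  {ω | ∀ q ∈ J, (q : C(Ω, Matrix (Fin n) (Fin n) ℂ) × B).1 ω = 0}

theorem isClosed_zeroLocus : IsClosed (zeroLocus J) := by
  simp only [zeroLocus, Set.ofPred_forall]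
  exact isClosed_iInter fun q => isClosed_iInter fun _ =>
    isClosed_eq (map_continuous _) continuous_const

theorem isClosed_scalarIdeal [LocallyCompactSpace Ω]
    (hJ : IsClosed (J : Set (pullbackAlg Ω Ω₀ n B ρ))) :
    IsClosed (scalarIdeal J : Set C(Ω, ℂ)) := by
  have : (scalarIdeal J : Set C(Ω, ℂ)) = ⋂ (g : C(Ω, Matrix (Fin n) (Fin n) ℂ))
      (hg : Set.EqOn g 0 Ω₀),
        (fun μ => ofVanishing ρ (μ • g) (ContinuousMap.smul_eqOn_zero hg μ)) ⁻¹' J := by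
    ext μ
    simp [scalarIdeal]
  rw [this]
  refine isClosed_iInter fun g => isClosed_iInter fun hg => hJ.preimage ?_
  have : Continuous fun μ : C(Ω, ℂ) => μ • g :=
    ContinuousMap.continuous_of_continuous_uncurry _ <| by
      show Continuous fun p : C(Ω, ℂ) × Ω => p.1 p.2 • g p.2
      fun_prop
  exact (this.prodMk continuous_const).subtype_mk _

theorem mem_setOfIdeal_scalarIdeal [T1Space Ω] [NormalSpace Ω] (hΩ₀ : IsClosed Ω₀) {ω : Ω}
    (hω : ω ∉ Ω₀) (hωJ : ω ∉ zeroLocus J) :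
    ω ∈ ContinuousMap.setOfIdeal (scalarIdeal J) := by
  obtain ⟨r, hr, hrω⟩ : ∃ r ∈ J, (r : C(Ω, Matrix (Fin n) (Fin n) ℂ) × B).1 ω ≠ 0 := by
    simpa [zeroLocus] using hωJ
  set f := (r : C(Ω, Matrix (Fin n) (Fin n) ℂ) × B).1
  obtain ⟨j, k, hjk⟩ : ∃ j k, f ω j k ≠ 0 := by
    by_contra! h
    exact hrω (Matrix.ext h)
  obtain ⟨e, he0, he1, -⟩ := exists_continuous_zero_one_of_isClosed hΩ₀ isClosed_singleton
    (Set.disjoint_singleton_right.2 hω)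
  set e' : C(Ω, ℂ) := (ContinuousMap.mk ((↑) : ℝ → ℂ) Complex.continuous_ofReal).comp e
  have he' : Set.EqOn e' 0 Ω₀ := fun ω' hω' => by simp [e', he0 hω']
  set μ : C(Ω, ℂ) := e' * ⟨fun ω' => f ω' j k, by fun_prop⟩
  refine ContinuousMap.mem_setOfIdeal.2 ⟨μ, fun g hg => ?_, by simp [μ, e', he1 rfl, hjk]⟩
  have hL : ∀ i : Fin n, Set.EqOn (e' • ContinuousMap.const Ω (Matrix.single i j (1 : ℂ))) 0 Ω₀ :=
    fun i ω' hω' => by simp [he' hω']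
  have hR : ∀ i : Fin n, Set.EqOn (ContinuousMap.const Ω (Matrix.single k i (1 : ℂ)) * g) 0 Ω₀ :=
    fun i ω' hω' => by simp [hg hω']
  have hsum : ∑ i, ofVanishing ρ _ (hL i) * r * ofVanishing ρ _ (hR i) ∈ J :=
    sum_mem fun i _ => J.mul_mem_right _ _ (J.mul_mem_left _ r hr)
  convert hsum
  refine Subtype.ext (Prod.ext ?_ ?_)
  · ext1 ω'
    simp only [coe_ofVanishing, AddSubmonoidClass.coe_finsetSum, MulMemClass.coe_mul,
      Prod.fst_sum, Prod.fst_mul, ContinuousMap.sum_apply, ContinuousMap.mul_apply,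
      ContinuousMap.smul_apply', ContinuousMap.const_apply, smul_mul_assoc, ← mul_assoc,
      ← Finset.smul_sum, Matrix.sum_single_mul_mul_single_mul, smul_smul]
    rfl
  · simp [Prod.snd_sum]

theorem idealOfSet_le_scalarIdeal [CompactSpace Ω] [T2Space Ω] (hΩ₀ : IsClosed Ω₀)
    (hJ : IsClosed (J : Set (pullbackAlg Ω Ω₀ n B ρ))) :
    ContinuousMap.idealOfSet ℂ (Ω₀ ∪ zeroLocus J)ᶜ ≤ scalarIdeal J := by
  rw [← ContinuousMap.idealOfSet_ofIdeal_isClosed (isClosed_scalarIdeal hJ)]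
  refine (ContinuousMap.ideal_gc Ω ℂ).monotone_u fun ω hω => ?_
  rw [Set.mem_compl_iff, Set.mem_union, not_or] at hω
  exact mem_setOfIdeal_scalarIdeal hΩ₀ hω.1 hω.2

theorem mem_of_snd_eq_zero [CompactSpace Ω] [T2Space Ω] (hΩ₀ : IsClosed Ω₀)
    (hJ : IsClosed (J : Set (pullbackAlg Ω Ω₀ n B ρ))) {x : pullbackAlg Ω Ω₀ n B ρ}
    (hx : (x : C(Ω, Matrix (Fin n) (Fin n) ℂ) × B).2 = 0)
    (hxJ : Set.EqOn (x : C(Ω, Matrix (Fin n) (Fin n) ℂ) × B).1 0 (zeroLocus J)) :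
    x ∈ J := by
  set f := (x : C(Ω, Matrix (Fin n) (Fin n) ℂ) × B).1
  have hf : Set.EqOn f 0 (Ω₀ ∪ zeroLocus J) :=
    (fst_eqOn_zero_of_snd_eq_zero hx).union hxJ
  -- Matrices carry no global norm; the sup metric built from the local one induces the
  -- compact-open topology of `C(Ω, Mₙ)` definitionally.
  let _ : PseudoMetricSpace C(Ω, Matrix (Fin n) (Fin n) ℂ) :=
    ContinuousMap.instPseudoMetricSpace Ω _
  rw [← SetLike.mem_coe, ← hJ.closure_eq]
  refine (Metric.mem_closure_iff (α := pullbackAlg Ω Ω₀ n B ρ)).2 fun ε hε => ?_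
  obtain ⟨χ, hχ, hχf⟩ := ContinuousMap.exists_eqOn_zero_norm_sub_smul_le ℂ f
    (hΩ₀.union isClosed_zeroLocus) hf (half_pos hε)
  have hχJ : χ ∈ scalarIdeal J := idealOfSet_le_scalarIdeal hΩ₀ hJ <|
    ContinuousMap.mem_idealOfSet.2 fun ω hω => hχ (by rwa [compl_compl] at hω)
  have hf₀ : Set.EqOn f 0 Ω₀ := hf.mono Set.subset_union_left
  refine ⟨ofVanishing ρ (χ • f) (ContinuousMap.smul_eqOn_zero hf₀ χ), hχJ f hf₀, ?_⟩
  calc dist x (ofVanishing ρ (χ • f) _) = dist f (χ • f) := by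
        rw [Subtype.dist_eq, Prod.dist_eq, coe_ofVanishing, hx, dist_self]
        exact max_eq_left dist_nonneg
    _ ≤ ε / 2 := (ContinuousMap.dist_le (half_pos hε).le).2 fun ω => by
        rw [dist_eq_norm]
        exact hχf ω
    _ < ε := half_lt_self hε

end pullbackAlg

theorem stmt2_general (Ω : Type u) [TopologicalSpace Ω] [CompactSpace Ω] [T2Space Ω]
    (Ω₀ : Set Ω) (hΩ₀ : IsClosed Ω₀) (n : ℕ)
    (B : Type u) [NonUnitalNormedRing B] [StarRing B] [CStarRing B] [NormedSpace ℂ B]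
    [IsScalarTower ℂ B B] [SMulCommClass ℂ B B] [StarModule ℂ B] [CompleteSpace B]
    (ρ : B →⋆ₙₐ[ℂ] C(↥Ω₀, Matrix (Fin n) (Fin n) ℂ))
    (J : TwoSidedIdeal ↥(pullbackAlg Ω Ω₀ n B ρ))
    (hJ : IsClosed ((J : Set ↥(pullbackAlg Ω Ω₀ n B ρ)))) :
    ∀ p : ↥(pullbackAlg Ω Ω₀ n B ρ), p ∈ J ↔
      ((∃ q ∈ J, ((q : C(Ω, Matrix (Fin n) (Fin n) ℂ) × B)).2
          = ((p : C(Ω, Matrix (Fin n) (Fin n) ℂ) × B)).2) ∧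
        ∀ ω : Ω,
          (∀ q ∈ J, ((q : C(Ω, Matrix (Fin n) (Fin n) ℂ) × B)).1 ω = 0) →
          ((p : C(Ω, Matrix (Fin n) (Fin n) ℂ) × B)).1 ω = 0) := by
  intro p
  refine ⟨fun hp => ⟨⟨p, hp, rfl⟩, fun ω hω => hω p hp⟩, ?_⟩
  rintro ⟨⟨q, hq, hqp⟩, hpZ⟩
  have hpq : p - q ∈ J := pullbackAlg.mem_of_snd_eq_zero hΩ₀ hJ (by simp [hqp])
    fun ω hω => by simp [hpZ ω hω, hω q hq]
  exact add_sub_cancel q p ▸ J.add_mem hq hpq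

/-- Let `Ω` be a compact Hausdorff space, `Ω⁰ ⊆ Ω` closed, `n ≥ 1`, `B` a C*-algebra,
`ρ : B → C(Ω⁰, Mₙ)` a *-homomorphism, and `R` the pullback of `ρ` and the restriction
map.  Then every closed two-sided ideal `J` of `R` consists exactly of those
`(f, b) ∈ R` such that `(g, b) ∈ J` for some `g`, and `f(ω) = 0` at every point `ω`
where all first coordinates of elements of `J` vanish. -/
theorem stmt2 (Ω : Type u) [TopologicalSpace Ω] [CompactSpace Ω] [T2Space Ω]
    (Ω₀ : Set Ω) (hΩ₀ : IsClosed Ω₀) (n : ℕ) (hn : 1 ≤ n)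
    (B : Type u) [NonUnitalNormedRing B] [StarRing B] [CStarRing B] [NormedSpace ℂ B]
    [IsScalarTower ℂ B B] [SMulCommClass ℂ B B] [StarModule ℂ B] [CompleteSpace B]
    (ρ : B →⋆ₙₐ[ℂ] C(↥Ω₀, Matrix (Fin n) (Fin n) ℂ))
    (J : TwoSidedIdeal ↥(pullbackAlg Ω Ω₀ n B ρ))
    (hJ : IsClosed ((J : Set ↥(pullbackAlg Ω Ω₀ n B ρ)))) :
    ∀ p : ↥(pullbackAlg Ω Ω₀ n B ρ), p ∈ J ↔
      ((∃ q ∈ J, ((q : C(Ω, Matrix (Fin n) (Fin n) ℂ) × B)).2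
          = ((p : C(Ω, Matrix (Fin n) (Fin n) ℂ) × B)).2) ∧
        ∀ ω : Ω,
          (∀ q ∈ J, ((q : C(Ω, Matrix (Fin n) (Fin n) ℂ) × B)).1 ω = 0) →
          ((p : C(Ω, Matrix (Fin n) (Fin n) ℂ) × B)).1 ω = 0) :=
  stmt2_general Ω Ω₀ hΩ₀ n B ρ J hJ
end

section
/- Let S be a Cu-semigroup possessing a greatest element ∞ (i.e., x ≤ ∞ for all x ∈ S), and let e ∈ S be full. Then there exists ℓ ∈ ℕ with e ≪ ℓ·e if and only if e ≪ ∞. -/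
/-- `x` is compactly contained in `y`: for every increasing sequence whose supremum
dominates `y`, some term of the sequence dominates `x`. -/
def IsCC {S : Type*} [Preorder S] (x y : S) : Prop :=
  ∀ f : ℕ → S, Monotone f → ∀ s : S, IsLUB (Set.range f) s → y ≤ s → ∃ n, x ≤ f n

/-- An abstract Cu-semigroup: a positively ordered commutative monoid satisfying the
axioms (P2)-(P5) of the category Cu. -/
class CuSemigroup (S : Type*) extends AddCommMonoid S, PartialOrder S where
  zero_le : ∀ x : S, 0 ≤ x
  add_le_add : ∀ {x₁ y₁ x₂ y₂ : S}, x₁ ≤ y₁ → x₂ ≤ y₂ → x₁ + x₂ ≤ y₁ + y₂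
  exists_sup : ∀ f : ℕ → S, Monotone f → ∃ s : S, IsLUB (Set.range f) s
  exists_cc_seq : ∀ x : S, ∃ f : ℕ → S,
    (∀ n, IsCC (f n) (f (n + 1))) ∧ IsLUB (Set.range f) x
  sup_add_sup : ∀ (f g : ℕ → S), Monotone f → Monotone g → ∀ a b : S,
    IsLUB (Set.range f) a → IsLUB (Set.range g) b →
    IsLUB (Set.range fun n => f n + g n) (a + b)
  cc_add_cc : ∀ {x₁ y₁ x₂ y₂ : S}, IsCC x₁ y₁ → IsCC x₂ y₂ → IsCC (x₁ + x₂) (y₁ + y₂)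

/-- An element `e` of a Cu-semigroup is full if every element compactly contained in
any element is dominated by some multiple of `e`. -/
def CuFull {S : Type*} [CuSemigroup S] (e : S) : Prop :=
  ∀ x x' : S, IsCC x' x → ∃ n : ℕ, x' ≤ n • e

/-! Write `x` as the supremum of a sequence `x₀ ≪ x₁ ≪ ⋯`. If `e ≪ x`, then `e ≤ xₙ` for some `n`,
and fullness applied to `xₙ₊₁ ≪ xₙ₊₂` gives `xₙ₊₁ ≤ ℓ • e`, so `e ≤ xₙ ≪ xₙ₊₁ ≤ ℓ • e`.
Conversely `e ≪ ℓ • e ≤ ∞`. -/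

section Preorder

variable {S : Type*} [Preorder S] {x x' y y' : S}

theorem IsCC.mono (hx : x' ≤ x) (h : IsCC x y) (hy : y ≤ y') : IsCC x' y' :=
  fun f hf s hs hys => (h f hf s hs (hy.trans hys)).imp fun _ hn => hx.trans hn

theorem IsCC.le (h : IsCC x y) : x ≤ y :=
  (h (fun _ => y) monotone_const y (by simp) le_rfl).elim fun _ hn => hn

theorem monotone_of_isCC_succ {f : ℕ → S} (hf : ∀ n, IsCC (f n) (f (n + 1))) : Monotone f :=
  monotone_nat_of_le_succ fun n => (hf n).le

end Preorder

theorem CuFull.exists_isCC_nsmul {S : Type*} [CuSemigroup S] {e x : S} (he : CuFull e)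
    (hex : IsCC e x) : ∃ ℓ : ℕ, IsCC e (ℓ • e) := by
  obtain ⟨f, hf, hx⟩ := CuSemigroup.exists_cc_seq x
  obtain ⟨n, hen⟩ := hex f (monotone_of_isCC_succ hf) x hx le_rfl
  obtain ⟨ℓ, hℓ⟩ := he _ _ (hf (n + 1))
  exact ⟨ℓ, (hf n).mono hen hℓ⟩

/-- In a Cu-semigroup with a greatest element `∞`, a full element `e` satisfies
`e ≪ ℓ·e` for some `ℓ ∈ ℕ` if and only if `e ≪ ∞`. -/
theorem stmt7 {S : Type*} [CuSemigroup S] (infty : S) (htop : ∀ x : S, x ≤ infty)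
    (e : S) (he : CuFull e) :
    (∃ ℓ : ℕ, IsCC e (ℓ • e)) ↔ IsCC e infty :=
  ⟨fun ⟨_, hℓ⟩ => hℓ.mono le_rfl (htop _), he.exists_isCC_nsmul⟩
end
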